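/- arXiv:0908.3167 — 2 statements merged into one kernel-verified Lean document; each statement's English description precedes it below -/
import Mathlib

section
/- Let 0 < r < 1 and set κ = 2√r/(1 − r). Then ∫_0^{π} (sin θ / √(cos²θ + κ²)) dθ = ln(1/r). Moreover, κ = 2√r/(1 − r) is the unique positive number with this property. -/
/-! The integrand is the derivative of `-arsinh (cos θ / κ)`, so the integral equals `2 arsinh (1 / κ)`,
an injective function of `κ > 0`. For `κ = 2√r/(1 - r)` one has `1 / κ = sinh (log (1 / √r))`, whence
the value `log (1 / r)`. -/

open Real

theorem hasDerivAt_neg_arsinh_cos_div {c : ℝ} (hc : 0 < c) (θ : ℝ) :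
    HasDerivAt (fun θ => -arsinh (cos θ / c)) (sin θ / √(cos θ ^ 2 + c ^ 2)) θ := by
  refine (((hasDerivAt_cos θ).div_const c).arsinh).neg.congr_deriv ?_
  have hsqrt : √(cos θ ^ 2 + c ^ 2) = c * √(1 + (cos θ / c) ^ 2) := by
    rw [← sqrt_sq hc.le, ← sqrt_mul (sq_nonneg c), sqrt_sq hc.le]
    congr 1
    field_simp
    ring
  have : 0 < √(1 + (cos θ / c) ^ 2) := by positivity
  rw [hsqrt, smul_eq_mul]
  field_simp

theorem integral_sin_div_sqrt_cos_sq_add_sq {c : ℝ} (hc : 0 < c) :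
    ∫ θ in (0 : ℝ)..π, sin θ / √(cos θ ^ 2 + c ^ 2) = 2 * arsinh (1 / c) := by
  have hcont : Continuous fun θ => sin θ / √(cos θ ^ 2 + c ^ 2) :=
    continuous_sin.div (by fun_prop) fun θ => by positivity
  rw [intervalIntegral.integral_eq_sub_of_hasDerivAt
    (fun θ _ => hasDerivAt_neg_arsinh_cos_div hc θ) (hcont.intervalIntegrable 0 π)]
  simp only [cos_pi, cos_zero, neg_div, arsinh_neg]
  ring

theorem arsinh_one_sub_div_two_mul_sqrt {r : ℝ} (hr : 0 < r) :
    arsinh ((1 - r) / (2 * √r)) = log (1 / r) / 2 := by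
  have hs : 0 < √r := sqrt_pos.2 hr
  have hsinh : sinh (log (√r)⁻¹) = (1 - r) / (2 * √r) := by
    rw [sinh_log (inv_pos.2 hs), inv_inv]
    field_simp
    rw [sq_sqrt hr.le]
  rw [← hsinh, arsinh_sinh, log_inv, log_sqrt hr.le, one_div, log_inv]
  ring

/-- For the optimal π pulse, `κ = 2√r/(1 - r)` satisfies the magnetization
loss constraint `∫₀^{π} sin θ/√(cos²θ + κ²) dθ = ln(1/r)`, and it is the
unique positive number with this property. -/
theorem stmt_7 (r κ : ℝ) (hr : 0 < r) (hr1 : r < 1) (hκ : κ = 2 * Real.sqrt r / (1 - r)) :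
    (∫ θ in (0 : ℝ)..π, Real.sin θ / Real.sqrt (Real.cos θ ^ 2 + κ ^ 2))
        = Real.log (1 / r) ∧
      ∀ κ' : ℝ, 0 < κ' →
        (∫ θ in (0 : ℝ)..π, Real.sin θ / Real.sqrt (Real.cos θ ^ 2 + κ' ^ 2))
            = Real.log (1 / r) →
          κ' = κ := by
  have hκ_pos : 0 < κ := hκ ▸ div_pos (by positivity) (sub_pos.2 hr1)
  have hlog : 2 * arsinh (1 / κ) = log (1 / r) := by
    rw [hκ, one_div_div, arsinh_one_sub_div_two_mul_sqrt hr]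
    ring
  refine ⟨by rw [integral_sin_div_sqrt_cos_sq_add_sq hκ_pos, hlog], fun κ' hκ' hint => ?_⟩
  rw [integral_sin_div_sqrt_cos_sq_add_sq hκ', ← hlog] at hint
  simpa using arsinh_injective (mul_left_cancel₀ two_ne_zero hint)
end

section
/- Let R > 0, κ > 0, 0 < ε < β ≤ π, and suppose θ : [0, T] → ℝ is differentiable with θ(0) = ε, θ(T) = β, θ(t) ∈ (0, π) for all t, and θ'(t) = R sin θ(t) √(cos²θ(t) + κ²) for all t ∈ [0, T]. If a : [0, T] → ℝ is differentiable with a(0) = 0 and a'(t) = −R sin²θ(t), then a(T) = −∫_ε^{β} (sin θ / √(cos²θ + κ²)) dθ. In particular, the final magnetization ratio M(T)/M(0) = e^{a(T)} equals exp(−∫_ε^{β} sin θ/√(cos²θ + κ²) dθ). -/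
open Real Set

/-!
Along the trajectory, `ȧ = -R sin²θ = -f(θ) θ̇` with `f θ = sin θ / √(cos²θ + κ²)`, so `a + F ∘ θ`
is constant for a primitive `F` of `f`; comparing its values at `0` and `T` is the change of
variable from time to angle. Working with the primitive avoids any integrability assumption on
`ȧ`.
-/

theorem sub_eq_intervalIntegral_of_hasDerivWithinAt_comp {f a θ θ' : ℝ → ℝ} {s t : ℝ}
    (hst : s ≤ t) (hf : Continuous f)
    (hθ : ∀ x ∈ Icc s t, HasDerivWithinAt θ (θ' x) (Icc s t) x)
    (ha : ∀ x ∈ Icc s t, HasDerivWithinAt a (f (θ x) * θ' x) (Icc s t) x) :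
    a t - a s = ∫ y in θ s..θ t, f y := by
  set F : ℝ → ℝ := fun u => ∫ y in θ s..u, f y
  have hF : ∀ x ∈ Icc s t, HasDerivWithinAt (fun x => a x - F (θ x)) 0 (Icc s t) x := by
    intro x hx
    have hFθ := ((hf.integral_hasStrictDerivAt (θ s) (θ x)).hasDerivAt).comp_hasDerivWithinAt x
      (hθ x hx)
    exact ((ha x hx).sub hFθ).congr_deriv (sub_self _)
  have hconst := constant_of_has_deriv_right_zero (fun x hx => (hF x hx).continuousWithinAt)
    (fun x hx => (hF x (Ico_subset_Icc_self hx)).mono_of_mem_nhdsWithin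
      (Icc_mem_nhdsGE_of_mem hx)) t (right_mem_Icc.2 hst)
  simp only [F, intervalIntegral.integral_same, sub_zero] at hconst
  linarith

theorem sqrt_cos_sq_add_sq_pos (x : ℝ) {κ : ℝ} (hκ : κ ≠ 0) : 0 < √(cos x ^ 2 + κ ^ 2) :=
  sqrt_pos.2 (by positivity)

theorem continuous_sin_div_sqrt_cos_sq_add_sq {κ : ℝ} (hκ : κ ≠ 0) :
    Continuous fun x => sin x / √(cos x ^ 2 + κ ^ 2) :=
  continuous_sin.div (by fun_prop) fun x => (sqrt_cos_sq_add_sq_pos x hκ).ne'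

theorem stmt_13_general (R κ ε β T : ℝ) (hκ : 0 < κ)
    (hT : 0 ≤ T)
    (θ : ℝ → ℝ) (hθ0 : θ 0 = ε) (hθT : θ T = β)
    (hderiv : ∀ t ∈ Set.Icc 0 T, HasDerivWithinAt θ
      (R * Real.sin (θ t) * Real.sqrt (Real.cos (θ t) ^ 2 + κ ^ 2)) (Set.Icc 0 T) t)
    (a : ℝ → ℝ) (ha0 : a 0 = 0)
    (haderiv : ∀ t ∈ Set.Icc 0 T,
      HasDerivWithinAt a (-R * Real.sin (θ t) ^ 2) (Set.Icc 0 T) t) :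
    a T = -∫ x in ε..β, Real.sin x / Real.sqrt (Real.cos x ^ 2 + κ ^ 2) ∧
      Real.exp (a T)
        = Real.exp (-∫ x in ε..β, Real.sin x / Real.sqrt (Real.cos x ^ 2 + κ ^ 2)) := by
  have hloss := sub_eq_intervalIntegral_of_hasDerivWithinAt_comp
    (f := fun x => -(sin x / √(cos x ^ 2 + κ ^ 2))) hT
    (continuous_sin_div_sqrt_cos_sq_add_sq hκ.ne').neg hderiv fun t ht =>
      (haderiv t ht).congr_deriv <| by
        have hsqrt := (sqrt_cos_sq_add_sq_pos (θ t) hκ.ne').ne'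
        field_simp
  rw [hθ0, hθT, ha0, sub_zero, intervalIntegral.integral_neg] at hloss
  exact ⟨hloss, congrArg exp hloss⟩

/-- Changing the integration variable from time to angle in `ȧ = -R sin²θ`
along the optimal trajectory `θ̇ = R sin θ √(cos²θ + κ²)`:
`a(T) = -∫_ε^β sin θ/√(cos²θ + κ²) dθ`, so the final magnetization ratio is
`M(T)/M(0) = e^{a(T)} = exp(-∫_ε^β sin θ/√(cos²θ + κ²) dθ)`. -/
theorem stmt_13 (R κ ε β T : ℝ) (hR : 0 < R) (hκ : 0 < κ)
    (hε : 0 < ε) (hεβ : ε < β) (hβ : β ≤ π) (hT : 0 ≤ T)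
    (θ : ℝ → ℝ) (hθ0 : θ 0 = ε) (hθT : θ T = β)
    (hrange : ∀ t ∈ Set.Icc 0 T, θ t ∈ Set.Ioo 0 π)
    (hderiv : ∀ t ∈ Set.Icc 0 T, HasDerivWithinAt θ
      (R * Real.sin (θ t) * Real.sqrt (Real.cos (θ t) ^ 2 + κ ^ 2)) (Set.Icc 0 T) t)
    (a : ℝ → ℝ) (ha0 : a 0 = 0)
    (haderiv : ∀ t ∈ Set.Icc 0 T,
      HasDerivWithinAt a (-R * Real.sin (θ t) ^ 2) (Set.Icc 0 T) t) :
    a T = -∫ x in ε..β, Real.sin x / Real.sqrt (Real.cos x ^ 2 + κ ^ 2) ∧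
      Real.exp (a T)
        = Real.exp (-∫ x in ε..β, Real.sin x / Real.sqrt (Real.cos x ^ 2 + κ ^ 2)) :=
  stmt_13_general R κ ε β T hκ hT θ hθ0 hθT hderiv a ha0 haderiv
end
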